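/- arXiv:1203.2129 — 6 statements merged into one kernel-verified Lean document; each statement's English description precedes it below -/
import Mathlib

section
/- Let X ∈ ℝ^k be a nonzero point on a ray τ through the origin, P, Q ∈ τ with 0 < d(P) < d(Q). Then X ∈ ⋃_{i∈ℕ} i·[P,Q] if and only if (d(Q)/(d(Q)−d(P)))·d(X) mod (d(P)·d(Q)/(d(Q)−d(P))) ≤ d(X). -/
open Pointwise

lemma seg_aux (k : ℕ) (v : EuclideanSpace ℝ (Fin k)) (p q : ℝ) (hpq : p ≤ q) :
    segment ℝ (p • v) (q • v) = (fun t : ℝ => t • v) '' Set.Icc p q := by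
  have := image_segment ℝ (LinearMap.toSpanSingleton ℝ (EuclideanSpace ℝ (Fin k)) v).toAffineMap p q
  simp only [LinearMap.coe_toAffineMap, LinearMap.toSpanSingleton_apply] at this
  rw [← this, segment_eq_Icc hpq]

lemma floor_aux (p q x : ℝ) (hp : 0 < p) (hpq : p < q) (hx : 0 < x) :
    (∃ i : ℕ, (i : ℝ) * p ≤ x ∧ x ≤ (i : ℝ) * q) ↔ x ≤ q * (⌊x / p⌋ : ℝ) := by
  have hq : 0 < q := hp.trans hpq
  constructor
  · rintro ⟨i, h1, h2⟩
    have hi : (i : ℤ) ≤ ⌊x / p⌋ := by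
      rw [Int.le_floor]
      push_cast
      rw [le_div_iff₀ hp]
      exact h1
    have hi' : (i : ℝ) ≤ (⌊x / p⌋ : ℝ) := by exact_mod_cast hi
    nlinarith
  · intro h
    have hn : (0 : ℤ) < ⌊x / p⌋ := by
      by_contra hc
      push_neg at hc
      have : q * (⌊x / p⌋ : ℝ) ≤ 0 := by
        apply mul_nonpos_of_nonneg_of_nonpos hq.le
        exact_mod_cast hc
      linarith
    have hcast : ((⌊x / p⌋.toNat : ℕ) : ℝ) = (⌊x / p⌋ : ℝ) := by
      exact_mod_cast Int.toNat_of_nonneg hn.le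
    refine ⟨⌊x / p⌋.toNat, ?_, ?_⟩
    · rw [hcast]
      have h1 : (⌊x / p⌋ : ℝ) ≤ x / p := Int.floor_le _
      rw [le_div_iff₀ hp] at h1
      exact h1
    · rw [hcast]; linarith

/-- Membership of a point `X` of a ray `τ` in the union of dilations of a segment
`[P,Q] ⊆ τ` is characterized by the modular inequality
`(d(Q)/(d(Q)−d(P)))·d(X) mod (d(P)d(Q)/(d(Q)−d(P))) ≤ d(X)`. -/
theorem stmt3 (k : ℕ) (v P Q X : EuclideanSpace ℝ (Fin k)) (hv : ‖v‖ = 1)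
    (p q x : ℝ) (hp : 0 < p) (hpq : p < q) (hx : 0 < x)
    (hP : P = p • v) (hQ : Q = q • v) (hX : X = x • v) :
    (X ∈ ⋃ i : ℕ, (i : ℝ) • segment ℝ P Q) ↔
      (‖Q‖ / (‖Q‖ - ‖P‖)) * ‖X‖ -
          (‖P‖ * ‖Q‖ / (‖Q‖ - ‖P‖)) *
            ((⌊(‖Q‖ / (‖Q‖ - ‖P‖)) * ‖X‖ / (‖P‖ * ‖Q‖ / (‖Q‖ - ‖P‖))⌋ : ℤ) : ℝ)
        ≤ ‖X‖ := by
  have hq : 0 < q := hp.trans hpq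
  have hqp : 0 < q - p := sub_pos.2 hpq
  have hv0 : v ≠ 0 := by intro h; rw [h] at hv; simp at hv
  have hnP : ‖P‖ = p := by rw [hP, norm_smul, hv, mul_one, Real.norm_eq_abs, abs_of_pos hp]
  have hnQ : ‖Q‖ = q := by rw [hQ, norm_smul, hv, mul_one, Real.norm_eq_abs, abs_of_pos hq]
  have hnX : ‖X‖ = x := by rw [hX, norm_smul, hv, mul_one, Real.norm_eq_abs, abs_of_pos hx]
  rw [hnP, hnQ, hnX]
  have harg : q / (q - p) * x / (p * q / (q - p)) = x / p := by
    field_simp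
  rw [harg]
  -- Step 1: reduce the membership to an arithmetic condition
  have hmem : (X ∈ ⋃ i : ℕ, (i : ℝ) • segment ℝ P Q) ↔
      ∃ i : ℕ, (i : ℝ) * p ≤ x ∧ x ≤ (i : ℝ) * q := by
    rw [hP, hQ, hX]
    simp only [Set.mem_iUnion, seg_aux k v p q hpq.le]
    constructor
    · rintro ⟨i, hi⟩
      rw [Set.mem_smul_set] at hi
      obtain ⟨y, hy, hxy⟩ := hi
      obtain ⟨t, ht, rfl⟩ := hy
      rw [smul_smul] at hxy
      have : x = (i : ℝ) * t := (smul_left_injective ℝ hv0 hxy.symm)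
      subst this
      exact ⟨i, mul_le_mul_of_nonneg_left ht.1 i.cast_nonneg,
        mul_le_mul_of_nonneg_left ht.2 i.cast_nonneg⟩
    · rintro ⟨i, h1, h2⟩
      have hi0 : 0 < (i : ℝ) := by
        rcases Nat.eq_zero_or_pos i with h | h
        · exfalso; subst h; simp at h1 h2; linarith
        · exact_mod_cast h
      refine ⟨i, ?_⟩
      rw [Set.mem_smul_set]
      refine ⟨(x / i) • v, ⟨x / i, ?_, rfl⟩, ?_⟩
      · constructor
        · rw [le_div_iff₀ hi0]; linarith
        · rw [div_le_iff₀ hi0]; linarith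
      · rw [smul_smul, mul_div_cancel₀ _ hi0.ne']
  rw [hmem, floor_aux p q x hp hpq hx]
  -- Step 2: the arithmetic equivalence
  set n : ℝ := (⌊x / p⌋ : ℝ) with hn
  have e1 : q / (q - p) * x - p * q / (q - p) * n = (q * x - p * q * n) / (q - p) := by
    field_simp
  rw [e1, div_le_iff₀ hqp]
  constructor
  · intro h; nlinarith
  · intro h; nlinarith
end

section
/- Let 𝓕 ⊆ ℕ² be a finitely generated submonoid, minimally generated by {g₁, …, g_p}, and let τ = ℚ_{≥0}·g₁ be an extremal ray of 𝓕 such that g₁ generates ℕ² ∩ τ (i.e., ℕ² ∩ τ = ℕ·g₁). Let s₁ = λ₁g₁, …, s_t = λ_tg₁ with integers 0 < λ₁ < ⋯ < λ_t generate a submonoid of ℕ·g₁. Let 𝓕' be the submonoid generated by B₁ ∪ B₂ where B₁ = {s₁,…,s_t, g₂,…,g_p} and B₂ = ⋃_{i=2}^p {g_i + j·g₁ : 1 ≤ j ≤ λ_t − 1}. Then 𝓕' ∩ τ = ⟨s₁,…,s_t⟩ and 𝓕' \ τ = 𝓕 \ τ. -/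
/-!
Every element of `𝓕'` lies in `𝓕`, and the generators of `𝓕'` other than the `sᵢ` lie off
`τ`. Since `τ` is a face of `𝓕` (a sum of elements of `𝓕` lies on `τ` only if both summands
do), an element of `𝓕'` on `τ` is a sum of `sᵢ` alone. Conversely, an element of `𝓕` off `τ`
has the form `a • g₁ + gᵢ + y` with `y ∈ ⟨g₂, …, g_p⟩`; dividing `a` by `λ_t` with remainder
`r` rewrites it as `(a / λ_t) • s_t + (gᵢ + r • g₁) + y`, a sum of generators of `𝓕'`.
-/

namespace AddSubmonoid

variable {M : Type*} [AddCommMonoid M]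

theorem mem_closure_of_mem_closure_union_of_mem {F : AddSubmonoid M} {τ A B : Set M}
    (hface : ∀ x ∈ F, ∀ y ∈ F, x ∉ τ → x + y ∉ τ) (hle : closure (A ∪ B) ≤ F)
    (hB : ∀ b ∈ B, b ∉ τ) {x : M} (hx : x ∈ closure (A ∪ B)) (hxτ : x ∈ τ) :
    x ∈ closure A := by
  induction hx using closure_induction with
  | mem y hy =>
    rcases hy with hyA | hyB
    · exact subset_closure hyA
    · exact absurd hxτ (hB y hyB)
  | zero => exact zero_mem _
  | add a b ha hb iha ihb =>
    have haτ : a ∈ τ := by_contra fun h => hface a (hle ha) b (hle hb) h hxτ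
    have hbτ : b ∈ τ :=
      by_contra fun h => hface b (hle hb) a (hle ha) h (add_comm a b ▸ hxτ)
    exact add_mem (iha haτ) (ihb hbτ)

theorem nsmul_add_mem_of_add_nsmul_mem {S : AddSubmonoid M} {g r : M} {L : ℕ} (hL : 0 < L)
    (hLg : L • g ∈ S) (hr : ∀ j < L, r + j • g ∈ S) (a : ℕ) : a • g + r ∈ S := by
  have hdecomp : a • g + r = (a / L) • (L • g) + (r + (a % L) • g) := by
    conv_lhs => rw [← Nat.div_add_mod a L]
    rw [add_smul, smul_smul, Nat.mul_comm]
    abel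
  rw [hdecomp]
  exact add_mem (nsmul_mem hLg _) (hr _ (Nat.mod_lt a hL))

theorem mem_of_mem_closure_union_of_notMem_closure_singleton {S : AddSubmonoid M} {g : M}
    {R : Set M} {L : ℕ} (hL : 0 < L) (hLg : L • g ∈ S) (hR : ∀ r ∈ R, ∀ j < L, r + j • g ∈ S)
    {x : M} (hx : x ∈ closure ({g} ∪ R)) (hxg : x ∉ closure {g}) : x ∈ S := by
  have hRS : closure R ≤ S := closure_le.2 fun r hr => by simpa using hR r hr 0 hL
  rw [closure_union, mem_sup] at hx
  obtain ⟨u, hu, y, hy, rfl⟩ := hx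
  obtain ⟨a, rfl⟩ := mem_closure_singleton.1 hu
  induction hy using closure_induction_left with
  | zero => exact absurd (by simpa using hu) hxg
  | add_left r hr y hy =>
    rw [← add_assoc]
    exact add_mem (nsmul_add_mem_of_add_nsmul_mem hL hLg (hR r hr) a) (hRS hy)

/-- The set `B₂` of generators of `𝓕'`. -/
def rayShifts {ι : Type*} (g : M) (gs : ι → M) (L : ℕ) : Set M :=
  ⋃ i, (fun j : ℕ => gs i + j • g) '' Set.Icc 1 (L - 1)

section rayShifts

variable {ι : Type*} {τ A : Set M} {g : M} {gs : ι → M} {L : ℕ}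

theorem closure_union_rayShifts_le (hA : A ⊆ closure {g}) :
    closure (A ∪ Set.range gs ∪ rayShifts g gs L) ≤ closure ({g} ∪ Set.range gs) := by
  have hg : closure {g} ≤ closure ({g} ∪ Set.range gs) := closure_mono Set.subset_union_left
  refine closure_le.2 (Set.union_subset (Set.union_subset (hA.trans hg) ?_) ?_)
  · exact subset_closure.trans' Set.subset_union_right
  · intro b hb
    obtain ⟨i, j, -, rfl⟩ := Set.mem_iUnion.1 hb
    exact add_mem (subset_closure (Or.inr ⟨i, rfl⟩)) (hg (mem_closure_singleton.2 ⟨j, rfl⟩))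

theorem notMem_of_mem_range_union_rayShifts
    (hface : ∀ x ∈ closure ({g} ∪ Set.range gs), ∀ y ∈ closure ({g} ∪ Set.range gs),
      x ∉ τ → x + y ∉ τ)
    (hgs : ∀ i, gs i ∉ τ) {b : M} (hb : b ∈ Set.range gs ∪ rayShifts g gs L) : b ∉ τ := by
  rcases hb with ⟨i, rfl⟩ | hb
  · exact hgs i
  · obtain ⟨i, j, -, rfl⟩ := Set.mem_iUnion.1 hb
    exact hface _ (subset_closure (Or.inr ⟨i, rfl⟩)) _
      (closure_mono Set.subset_union_left (mem_closure_singleton.2 ⟨j, rfl⟩)) (hgs i)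

theorem add_nsmul_mem_closure_range_union_rayShifts (i : ι) {j : ℕ} (hj : j < L) :
    gs i + j • g ∈ closure (Set.range gs ∪ rayShifts g gs L) := by
  apply subset_closure
  rcases j.eq_zero_or_pos with rfl | hj0
  · simp
  · exact Or.inr (Set.mem_iUnion.2 ⟨i, j, ⟨hj0, by omega⟩, rfl⟩)

theorem closure_union_rayShifts_inter_eq
    (hface : ∀ x ∈ closure ({g} ∪ Set.range gs), ∀ y ∈ closure ({g} ∪ Set.range gs),
      x ∉ τ → x + y ∉ τ)
    (hgs : ∀ i, gs i ∉ τ) (hA : A ⊆ closure {g}) (hray : (closure {g} : Set M) ⊆ τ) :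
    (closure (A ∪ Set.range gs ∪ rayShifts g gs L) : Set M) ∩ τ = closure A := by
  ext x
  refine ⟨fun ⟨hx, hxτ⟩ => ?_, fun hx => ⟨?_, hray (closure_le.2 hA hx)⟩⟩
  · rw [Set.union_assoc] at hx
    refine mem_closure_of_mem_closure_union_of_mem hface ?_
      (fun _ => notMem_of_mem_range_union_rayShifts hface hgs) hx hxτ
    exact Set.union_assoc .. ▸ closure_union_rayShifts_le hA
  · exact closure_mono (Set.subset_union_left.trans Set.subset_union_left) hx

theorem closure_union_rayShifts_diff_eq (hA : A ⊆ closure {g})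
    (hray : (closure {g} : Set M) ⊆ τ) (hL : 0 < L) (hLg : L • g ∈ A) :
    (closure (A ∪ Set.range gs ∪ rayShifts g gs L) : Set M) \ τ =
      (closure ({g} ∪ Set.range gs) : Set M) \ τ := by
  ext x
  refine ⟨fun ⟨hx, hxτ⟩ => ⟨closure_union_rayShifts_le hA hx, hxτ⟩, fun ⟨hx, hxτ⟩ => ⟨?_, hxτ⟩⟩
  have hle : closure (Set.range gs ∪ rayShifts g gs L) ≤
      closure (A ∪ Set.range gs ∪ rayShifts g gs L) :=
    closure_mono (Set.union_assoc .. ▸ Set.subset_union_right)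
  have hLg' : L • g ∈ closure (A ∪ Set.range gs ∪ rayShifts g gs L) :=
    subset_closure (Or.inl (Or.inl hLg))
  refine mem_of_mem_closure_union_of_notMem_closure_singleton hL hLg' ?_ hx
    fun h => hxτ (hray h)
  rintro _ ⟨i, rfl⟩ j hj
  exact hle (add_nsmul_mem_closure_range_union_rayShifts i hj)

end rayShifts

end AddSubmonoid

theorem nsmul_mem_ray (g : ℕ × ℕ) (n : ℕ) :
    n • g ∈ {x : ℕ × ℕ | ∃ q : ℚ, 0 ≤ q ∧ (x.1 : ℚ) = q * g.1 ∧ (x.2 : ℚ) = q * g.2} :=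
  ⟨n, n.cast_nonneg, by simp, by simp⟩

theorem stmt7_general (p t : ℕ) (g₁ : ℕ × ℕ) (gs : Fin p → ℕ × ℕ) (lam : Fin (t + 1) → ℕ)
    (F : AddSubmonoid (ℕ × ℕ))
    (τ : Set (ℕ × ℕ))
    (hτ : τ = {x | ∃ q : ℚ, 0 ≤ q ∧ (x.1 : ℚ) = q * g₁.1 ∧ (x.2 : ℚ) = q * g₁.2})
    (hgen : F = AddSubmonoid.closure ({g₁} ∪ Set.range gs))
    (hextr2 : ∀ i, gs i ∉ τ)
    (hextr3 : ∀ x ∈ F, ∀ y ∈ F, x ∉ τ → x + y ∉ τ)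
    (hlam0 : 0 < lam 0) (hmono : StrictMono lam)
    (s : Fin (t + 1) → ℕ × ℕ) (hs : ∀ i, s i = lam i • g₁)
    (F' : AddSubmonoid (ℕ × ℕ))
    (hF' : F' = AddSubmonoid.closure (Set.range s ∪ Set.range gs ∪
        ⋃ i : Fin p, (fun j : ℕ => gs i + j • g₁) '' Set.Icc 1 (lam (Fin.last t) - 1))) :
    (F' : Set (ℕ × ℕ)) ∩ τ = ↑(AddSubmonoid.closure (Set.range s)) ∧
    (F' : Set (ℕ × ℕ)) \ τ = (F : Set (ℕ × ℕ)) \ τ := by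
  subst hgen hF'
  have hs_mem : Set.range s ⊆ AddSubmonoid.closure {g₁} := by
    rintro _ ⟨i, rfl⟩
    exact AddSubmonoid.mem_closure_singleton.2 ⟨lam i, (hs i).symm⟩
  have hray : (AddSubmonoid.closure {g₁} : Set (ℕ × ℕ)) ⊆ τ := by
    intro x hx
    obtain ⟨n, rfl⟩ := AddSubmonoid.mem_closure_singleton.1 hx
    exact hτ ▸ nsmul_mem_ray g₁ n
  have hL : 0 < lam (Fin.last t) := hlam0.trans_le (hmono.monotone (Fin.zero_le _))
  exact ⟨AddSubmonoid.closure_union_rayShifts_inter_eq hextr3 hextr2 hs_mem hray,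
    AddSubmonoid.closure_union_rayShifts_diff_eq hs_mem hray hL ⟨_, hs _⟩⟩

/-- Replacing the generators of a finitely generated submonoid `𝓕 ⊆ ℕ²` along an
extremal ray `τ = ℚ_{≥0}·g₁` by a subsemigroup `⟨s₁,…,s_t⟩` of `ℕ·g₁` yields a
semigroup `𝓕'` with `𝓕' ∩ τ = ⟨s₁,…,s_t⟩` and `𝓕' \ τ = 𝓕 \ τ`. -/
theorem stmt7 (p t : ℕ) (g₁ : ℕ × ℕ) (gs : Fin p → ℕ × ℕ) (lam : Fin (t + 1) → ℕ)
    (F : AddSubmonoid (ℕ × ℕ))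
    (τ : Set (ℕ × ℕ))
    (hτ : τ = {x | ∃ q : ℚ, 0 ≤ q ∧ (x.1 : ℚ) = q * g₁.1 ∧ (x.2 : ℚ) = q * g₁.2})
    (hgen : F = AddSubmonoid.closure ({g₁} ∪ Set.range gs))
    (hminimal : ∀ x ∈ ({g₁} ∪ Set.range gs : Set (ℕ × ℕ)),
        x ∉ AddSubmonoid.closure (({g₁} ∪ Set.range gs : Set (ℕ × ℕ)) \ {x}))
    (hlat : ∀ x : ℕ × ℕ, x ∈ τ → ∃ n : ℕ, x = n • g₁)
    (hextr1 : ∀ x ∈ F, x ∈ τ → ∃ n : ℕ, x = n • g₁)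
    (hextr2 : ∀ i, gs i ∉ τ)
    (hextr3 : ∀ x ∈ F, ∀ y ∈ F, x ∉ τ → x + y ∉ τ)
    (hlam0 : 0 < lam 0) (hmono : StrictMono lam)
    (s : Fin (t + 1) → ℕ × ℕ) (hs : ∀ i, s i = lam i • g₁)
    (F' : AddSubmonoid (ℕ × ℕ))
    (hF' : F' = AddSubmonoid.closure (Set.range s ∪ Set.range gs ∪
        ⋃ i : Fin p, (fun j : ℕ => gs i + j • g₁) '' Set.Icc 1 (lam (Fin.last t) - 1))) :
    (F' : Set (ℕ × ℕ)) ∩ τ = ↑(AddSubmonoid.closure (Set.range s)) ∧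
    (F' : Set (ℕ × ℕ)) \ τ = (F : Set (ℕ × ℕ)) \ τ :=
  stmt7_general p t g₁ gs lam F τ hτ hgen hextr2 hextr3 hlam0 hmono s hs F' hF'
end

section
/- Let 𝓕 ⊆ ℕ² be a finitely generated submonoid and A ⊆ 𝓕 a finite set with 0 ∉ A. If 𝓕 \ A is closed under addition, then 𝓕 \ A is a finitely generated submonoid of ℕ². -/
/-! Measure size by `ν (a, b) = a + b` and let `b = max ν(A)`, `m = max ν(S)` for generators `S`
of `𝓕`. Cutting a sum of generators at the first partial sum of size exceeding `b` splits every
element of `𝓕 \ A` of size above `2b + m` as `u + v` with `b < ν u ≤ b + m` and `b < ν v < ν x`,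
so `u, v ∉ A`. Hence `𝓕 \ A` is generated by its finitely many elements of size at most `2b + m`. -/

namespace AddSubmonoid

variable {M : Type*} [AddCommMonoid M]

theorem exists_add_of_lt_of_mem_closure (ν : M →+ ℕ) {S : Set M} {m : ℕ}
    (hS : ∀ s ∈ S, ν s ≤ m) {x : M} (hx : x ∈ closure S) :
    ∀ b < ν x, ∃ u ∈ closure S, ∃ v ∈ closure S, x = u + v ∧ b < ν u ∧ ν u ≤ b + m := by
  induction hx using closure_induction with
  | mem s hs =>
    intro b hb
    exact ⟨s, subset_closure hs, 0, zero_mem _, (add_zero s).symm, hb, by linarith [hS s hs]⟩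
  | zero => simp
  | add y z hy hz ihy ihz =>
    intro b hb
    by_cases hby : b < ν y
    · obtain ⟨u, hu, v, hv, rfl, hbu, hub⟩ := ihy b hby
      exact ⟨u, hu, v + z, add_mem hv hz, add_assoc u v z, hbu, hub⟩
    · rw [map_add] at hb
      obtain ⟨u, hu, v, hv, rfl, hbu, hub⟩ := ihz (b - ν y) (by omega)
      refine ⟨y + u, add_mem hy hu, v, hv, (add_assoc y u v).symm, ?_, ?_⟩ <;>
        rw [map_add] <;> omega

theorem eq_closure_of_size_le (ν : M →+ ℕ) {S : Set M} {m b : ℕ} (hS : ∀ s ∈ S, ν s ≤ m)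
    (T : AddSubmonoid M) (hT : T ≤ closure S) (hcompl : ∀ x ∈ closure S, x ∉ T → ν x ≤ b) :
    T = closure {x | x ∈ T ∧ ν x ≤ 2 * b + m} := by
  refine le_antisymm (fun x hx => ?_) (closure_le.2 fun x hx => hx.1)
  induction hn : ν x using Nat.strong_induction_on generalizing x with
  | _ n ih =>
    by_cases hsmall : ν x ≤ 2 * b + m
    · exact subset_closure ⟨hx, hsmall⟩
    obtain ⟨u, hu, v, hv, rfl, hbu, hub⟩ :=
      exists_add_of_lt_of_mem_closure ν hS (hT hx) b (by omega)
    rw [map_add] at hn hsmall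
    have huT : u ∈ T := by_contra fun h => absurd (hcompl u hu h) (by omega)
    have hvT : v ∈ T := by_contra fun h => absurd (hcompl v hv h) (by omega)
    exact add_mem (subset_closure ⟨huT, by omega⟩) (ih (ν v) (by omega) v hvT rfl)

end AddSubmonoid

theorem stmt8_general (F : AddSubmonoid (ℕ × ℕ)) (hFG : F.FG)
    (A : Set (ℕ × ℕ)) (hAfin : A.Finite) (h0 : (0 : ℕ × ℕ) ∉ A)
    (hclosed : ∀ x ∈ (F : Set (ℕ × ℕ)) \ A, ∀ y ∈ (F : Set (ℕ × ℕ)) \ A,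
        x + y ∈ (F : Set (ℕ × ℕ)) \ A) :
    ∃ F' : AddSubmonoid (ℕ × ℕ),
      (F' : Set (ℕ × ℕ)) = (F : Set (ℕ × ℕ)) \ A ∧ F'.FG := by
  obtain ⟨S, rfl⟩ := hFG
  let ν : ℕ × ℕ →+ ℕ := AddMonoidHom.fst ℕ ℕ + AddMonoidHom.snd ℕ ℕ
  let T : AddSubmonoid (ℕ × ℕ) :=
    { carrier := (AddSubmonoid.closure (S : Set (ℕ × ℕ)) : Set (ℕ × ℕ)) \ A
      zero_mem' := ⟨zero_mem _, h0⟩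
      add_mem' := fun hx hy => hclosed _ hx _ hy }
  set b := hAfin.toFinset.sup ν
  set m := S.sup ν
  refine ⟨T, rfl, (AddSubmonoid.fg_iff T).2 ⟨{x | x ∈ T ∧ ν x ≤ 2 * b + m}, ?_, ?_⟩⟩
  · refine (T.eq_closure_of_size_le ν (fun s hs => Finset.le_sup hs) (fun x hx => hx.1)
      fun x hx hxT => ?_).symm
    exact Finset.le_sup (hAfin.mem_toFinset.2 (not_not.1 fun hxA => hxT ⟨hx, hxA⟩))
  · refine (Set.finite_Iic (2 * b + m, 2 * b + m)).subset ?_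
    rintro ⟨c, d⟩ ⟨-, hcd⟩
    change c + d ≤ 2 * b + m at hcd
    exact ⟨by change c ≤ _; omega, by change d ≤ _; omega⟩

/-- If `𝓕 ⊆ ℕ²` is a finitely generated submonoid, `A ⊆ 𝓕` finite with `0 ∉ A`,
and `𝓕 \ A` is closed under addition, then `𝓕 \ A` is a finitely generated
submonoid of `ℕ²`. -/
theorem stmt8 (F : AddSubmonoid (ℕ × ℕ)) (hFG : F.FG)
    (A : Set (ℕ × ℕ)) (hA : A ⊆ F) (hAfin : A.Finite) (h0 : (0 : ℕ × ℕ) ∉ A)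
    (hclosed : ∀ x ∈ (F : Set (ℕ × ℕ)) \ A, ∀ y ∈ (F : Set (ℕ × ℕ)) \ A,
        x + y ∈ (F : Set (ℕ × ℕ)) \ A) :
    ∃ F' : AddSubmonoid (ℕ × ℕ),
      (F' : Set (ℕ × ℕ)) = (F : Set (ℕ × ℕ)) \ A ∧ F'.FG :=
  stmt8_general F hFG A hAfin h0 hclosed
end

section
/- Let a, b > 0 be reals and for each i ∈ ℕ let C_i be the circle of center (ia, ib) and radius ib in ℝ² (so C_i is tangent to the x-axis from above). For i large enough, C_i ∩ C_{i+1} is nonempty, and if P_i denotes the point of C_i ∩ C_{i+1} with smaller y-coordinate, then the y-coordinate of P_i equals h_i = (a²b + 2a²bi − √(−a⁶ + 4a⁴b²i + 4a⁴b²i²)) / (2(a² + b²)). -/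
/-- For the circles `C_i` of center `(ia, ib)` and radius `ib`, when the radicand
is nonnegative the intersection `C_i ∩ C_{i+1}` is nonempty and its lowest point
has `y`-coordinate `h_i`. -/
theorem stmt9 (a b : ℝ) (ha : 0 < a) (hb : 0 < b)
    (C : ℕ → Set (ℝ × ℝ))
    (hC : ∀ i, C i = {p : ℝ × ℝ | (p.1 - i * a) ^ 2 + (p.2 - i * b) ^ 2 = ((i : ℝ) * b) ^ 2}) :
    ∀ i : ℕ, a ^ 2 ≤ 4 * b ^ 2 * i * (i + 1) →
      ∃ P ∈ C i ∩ C (i + 1),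
        (∀ Q ∈ C i ∩ C (i + 1), P.2 ≤ Q.2) ∧
        P.2 = (a ^ 2 * b + 2 * a ^ 2 * b * i -
            Real.sqrt (-a ^ 6 + 4 * a ^ 4 * b ^ 2 * i + 4 * a ^ 4 * b ^ 2 * i ^ 2)) /
          (2 * (a ^ 2 + b ^ 2)) := by
  intro i hi
  have ha0 : a ≠ 0 := ne_of_gt ha
  have hApos : (0:ℝ) < a ^ 2 + b ^ 2 := by positivity
  have hA0 : a ^ 2 + b ^ 2 ≠ 0 := ne_of_gt hApos
  have hDnn : (0:ℝ) ≤ -a ^ 6 + 4 * a ^ 4 * b ^ 2 * i + 4 * a ^ 4 * b ^ 2 * (i:ℝ) ^ 2 := by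
    have h1 : (0:ℝ) ≤ a ^ 4 * (4 * b ^ 2 * i * (i + 1) - a ^ 2) :=
      mul_nonneg (by positivity) (by linarith)
    nlinarith [h1]
  set s : ℝ := Real.sqrt (-a ^ 6 + 4 * a ^ 4 * b ^ 2 * i + 4 * a ^ 4 * b ^ 2 * (i:ℝ) ^ 2) with hsdef
  have hs0 : 0 ≤ s := Real.sqrt_nonneg _
  have hs2 : s ^ 2 = -a ^ 6 + 4 * a ^ 4 * b ^ 2 * i + 4 * a ^ 4 * b ^ 2 * (i:ℝ) ^ 2 :=
    Real.sq_sqrt hDnn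
  set y0 : ℝ := (a ^ 2 * b + 2 * a ^ 2 * b * i - s) / (2 * (a ^ 2 + b ^ 2)) with hy0def
  set x0 : ℝ := ((2 * i + 1) * a ^ 2 - 2 * b * y0) / (2 * a) with hx0def
  have hy0 : 2 * (a ^ 2 + b ^ 2) * y0 = a ^ 2 * b + 2 * a ^ 2 * b * i - s := by
    rw [hy0def]; field_simp
  have hx : 2 * a * x0 = (2 * i + 1) * a ^ 2 - 2 * b * y0 := by
    rw [hx0def]; field_simp
  -- the key quadratic satisfied by y0
  have hfA : (a ^ 2 + b ^ 2) *
      (4 * (a ^ 2 + b ^ 2) * y0 ^ 2 - (4 * a ^ 2 * b + 8 * a ^ 2 * b * i) * y0 + a ^ 4) = 0 := by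
    have hsq : (2 * (a ^ 2 + b ^ 2) * y0 - (a ^ 2 * b + 2 * a ^ 2 * b * i)) ^ 2 = s ^ 2 := by
      rw [hy0]; ring
    linear_combination hsq + hs2
  have hf : 4 * (a ^ 2 + b ^ 2) * y0 ^ 2 - (4 * a ^ 2 * b + 8 * a ^ 2 * b * i) * y0 + a ^ 4 = 0 :=
    by rcases mul_eq_zero.mp hfA with h | h
       · exact absurd h hA0
       · exact h
  have ha4 : (0:ℝ) < 4 * a ^ 2 := by positivity
  refine ⟨(x0, y0), ⟨?_, ?_⟩, ?_, rfl⟩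
  · rw [hC]
    show (x0 - i * a) ^ 2 + (y0 - i * b) ^ 2 = ((i : ℝ) * b) ^ 2
    have h4 : 4 * a ^ 2 * ((x0 - i * a) ^ 2 + (y0 - i * b) ^ 2 - ((i : ℝ) * b) ^ 2) = 0 := by
      linear_combination hf +
        (2 * a * x0 + (2 * (i:ℝ) + 1) * a ^ 2 - 2 * b * y0 - 4 * (i:ℝ) * a ^ 2) * hx
    rcases mul_eq_zero.mp h4 with h | h
    · exact absurd h (ne_of_gt ha4)
    · linarith
  · rw [hC]
    show (x0 - ((i:ℕ) + 1 : ℕ) * a) ^ 2 + (y0 - ((i:ℕ) + 1 : ℕ) * b) ^ 2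
        = ((((i:ℕ) + 1 : ℕ) : ℝ) * b) ^ 2
    push_cast
    have h4 : 4 * a ^ 2 * ((x0 - ((i:ℝ) + 1) * a) ^ 2 + (y0 - ((i:ℝ) + 1) * b) ^ 2
        - (((i:ℝ) + 1) * b) ^ 2) = 0 := by
      linear_combination hf +
        (2 * a * x0 + (2 * (i:ℝ) + 1) * a ^ 2 - 2 * b * y0 - 4 * ((i:ℝ) + 1) * a ^ 2) * hx
    rcases mul_eq_zero.mp h4 with h | h
    · exact absurd h (ne_of_gt ha4)
    · linarith
  · rintro Q ⟨hQ1, hQ2⟩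
    rw [hC] at hQ1 hQ2
    have hQ1' : (Q.1 - i * a) ^ 2 + (Q.2 - i * b) ^ 2 = ((i : ℝ) * b) ^ 2 := hQ1
    have hQ2' : (Q.1 - ((i:ℝ) + 1) * a) ^ 2 + (Q.2 - ((i:ℝ) + 1) * b) ^ 2 =
        (((i:ℝ) + 1) * b) ^ 2 := by
      have h := hQ2
      push_cast at h
      exact h
    have hlin : 2 * a * Q.1 + 2 * b * Q.2 = (2 * i + 1) * a ^ 2 := by
      linear_combination hQ1' - hQ2'
    have hfQ : 4 * (a ^ 2 + b ^ 2) * Q.2 ^ 2 - (4 * a ^ 2 * b + 8 * a ^ 2 * b * i) * Q.2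
        + a ^ 4 = 0 := by
      linear_combination 4 * a ^ 2 * hQ1' -
        (2 * a * Q.1 + 2 * b * Q.2 - (2 * i + 1) * a ^ 2 + 2 * a ^ 2 - 4 * b * Q.2) * hlin
    have hu : (2 * (a ^ 2 + b ^ 2) * Q.2 - (a ^ 2 * b + 2 * a ^ 2 * b * i)) ^ 2 = s ^ 2 := by
      linear_combination (a ^ 2 + b ^ 2) * hfQ - hs2
    have hkey : -s ≤ 2 * (a ^ 2 + b ^ 2) * Q.2 - (a ^ 2 * b + 2 * a ^ 2 * b * i) := by
      nlinarith [hu, hs0,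
        sq_nonneg (2 * (a ^ 2 + b ^ 2) * Q.2 - (a ^ 2 * b + 2 * a ^ 2 * b * (i:ℝ)) + s)]
    show y0 ≤ Q.2
    rw [hy0def, div_le_iff₀ (by positivity)]
    linarith
end

section
/- Let C be the closed disk with center (a,b) ∈ ℝ²_{>0} and radius r, 0 < r < √(a²+b²). Every X = (x,y) ∈ ⋃_{i≥1} iC whose ray from the origin meets the interior of C satisfies the modular inequality: (1/2)·((a,b)·(x,y)/√(‖X‖²r² − ((b,−a)·(x,y))²) + 1)·‖X‖ mod (‖X‖(a²+b²−r²)/(2√(‖X‖²r² − ((b,−a)·(x,y))²))) ≤ ‖X‖. -/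
set_option maxHeartbeats 1000000 in
/-- Every point `X = (x,y)` of the circle monoid whose ray meets the interior of
the circle `C` satisfies the modular inequality of Corollary `ecuacion_circulos`. -/
theorem stmt13 (a b r x y : ℝ) (ha : 0 < a) (hb : 0 < b) (hr : 0 < r)
    (hrs : r < Real.sqrt (a ^ 2 + b ^ 2))
    (hmem : ∃ i : ℕ, 1 ≤ i ∧ (x - i * a) ^ 2 + (y - i * b) ^ 2 ≤ ((i : ℝ) * r) ^ 2)
    (hint : (b * x - a * y) ^ 2 < (x ^ 2 + y ^ 2) * r ^ 2) :
    (1 / 2) * ((a * x + b * y) /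
          Real.sqrt ((x ^ 2 + y ^ 2) * r ^ 2 - (b * x - a * y) ^ 2) + 1) *
        Real.sqrt (x ^ 2 + y ^ 2) -
      (Real.sqrt (x ^ 2 + y ^ 2) * (a ^ 2 + b ^ 2 - r ^ 2) /
          (2 * Real.sqrt ((x ^ 2 + y ^ 2) * r ^ 2 - (b * x - a * y) ^ 2))) *
        ((⌊((1 / 2) * ((a * x + b * y) /
              Real.sqrt ((x ^ 2 + y ^ 2) * r ^ 2 - (b * x - a * y) ^ 2) + 1) *
            Real.sqrt (x ^ 2 + y ^ 2)) /
            (Real.sqrt (x ^ 2 + y ^ 2) * (a ^ 2 + b ^ 2 - r ^ 2) /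
              (2 * Real.sqrt ((x ^ 2 + y ^ 2) * r ^ 2 - (b * x - a * y) ^ 2)))⌋ : ℤ) : ℝ)
      ≤ Real.sqrt (x ^ 2 + y ^ 2) := by
  obtain ⟨i, hi1, hidisk⟩ := hmem
  have hxy : 0 < x ^ 2 + y ^ 2 := by
    nlinarith [sq_nonneg (b * x - a * y), sq_nonneg x, sq_nonneg y, sq_nonneg r]
  set n := Real.sqrt (x ^ 2 + y ^ 2) with hn_def
  set D := Real.sqrt ((x ^ 2 + y ^ 2) * r ^ 2 - (b * x - a * y) ^ 2) with hD_def
  set m := a ^ 2 + b ^ 2 - r ^ 2 with hm_def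
  set s := a * x + b * y with hs_def
  have hn2 : n ^ 2 = x ^ 2 + y ^ 2 := Real.sq_sqrt hxy.le
  have hn : 0 < n := Real.sqrt_pos.mpr hxy
  have hD2 : D ^ 2 = (x ^ 2 + y ^ 2) * r ^ 2 - (b * x - a * y) ^ 2 :=
    Real.sq_sqrt (by linarith)
  have hD : 0 < D := Real.sqrt_pos.mpr (by linarith)
  have hm : 0 < m := by
    have h1 : Real.sqrt (a ^ 2 + b ^ 2) ^ 2 = a ^ 2 + b ^ 2 :=
      Real.sq_sqrt (by positivity)
    have h2 : 0 ≤ Real.sqrt (a ^ 2 + b ^ 2) := Real.sqrt_nonneg _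
    rw [hm_def]; nlinarith
  have hi : (1 : ℝ) ≤ (i : ℝ) := by exact_mod_cast hi1
  have hq : (x ^ 2 + y ^ 2) - 2 * (i : ℝ) * s + (i : ℝ) ^ 2 * m ≤ 0 := by
    rw [hs_def, hm_def]; nlinarith [hidisk]
  have hs2 : s ^ 2 = D ^ 2 + m * (x ^ 2 + y ^ 2) := by
    rw [hD2, hs_def, hm_def]; ring
  have haux : 0 ≤ m * (2 * (i : ℝ) * s - (x ^ 2 + y ^ 2) - (i : ℝ) ^ 2 * m) :=
    mul_nonneg hm.le (by linarith)
  have hkey : ((i : ℝ) * m - s) ^ 2 ≤ D ^ 2 := by nlinarith [haux]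
  obtain ⟨hab1, hab2⟩ := abs_le_of_sq_le_sq' hkey hD.le
  have h_le : (i : ℝ) * m ≤ s + D := by linarith
  have h_ge : s - D ≤ (i : ℝ) * m := by linarith
  clear_value n D m s
  clear hn_def hD_def hm_def hs_def hq hs2 haux hkey hab1 hab2 hidisk hint hrs
  have hD0 : D ≠ 0 := ne_of_gt hD
  have hn0 : n ≠ 0 := ne_of_gt hn
  have hm0 : m ≠ 0 := ne_of_gt hm
  have hEF : (1 / 2) * (s / D + 1) * n / (n * m / (2 * D)) = (s + D) / m := by
    field_simp
  rw [hEF]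
  set K : ℝ := ((⌊(s + D) / m⌋ : ℤ) : ℝ) with hK_def
  have hk : (i : ℤ) ≤ ⌊(s + D) / m⌋ := by
    rw [Int.le_floor]
    push_cast
    exact (le_div_iff₀ hm).mpr h_le
  have hkK : (i : ℝ) ≤ K := by rw [hK_def]; exact_mod_cast hk
  have h2 : s - D ≤ K * m :=
    le_trans h_ge (mul_le_mul_of_nonneg_right hkK hm.le)
  have heq : (1 / 2) * (s / D + 1) * n - n * m / (2 * D) * K
      = n * (s + D - K * m) / (2 * D) := by
    field_simp
  rw [heq, div_le_iff₀ (by positivity : (0:ℝ) < 2 * D)]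
  nlinarith [mul_le_mul_of_nonneg_left (show s + D - K * m ≤ 2 * D by linarith) hn.le]
end

section
/- Let P₁ = (p₁₁, p₁₂), P₂ = (p₂₁, p₂₂), P_n = (p_{n1}, p_{n2}) ∈ ℝ²_{≥0} with P₁ ≠ 0, and suppose that for all sufficiently large i ∈ ℕ the segments i·[P₁,P₂] and (i+1)·[P_n,P₁] intersect in exactly one point V_i. Then the distance from V_i to the line through the origin and P₁ is independent of i. -/
open Pointwise

/-!
Write `V_i = i • P₁ + u • (P₂ - P₁) = (i + 1) • P₁ + v • (Pₙ - P₁)`. Then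
`u • (P₂ - P₁) - v • (Pₙ - P₁) = P₁` is a linear system in `(u, v)` that does not involve `i`,
and the area form `ω(P₁, V_i) = u • ω(P₁, P₂ - P₁)`, which is `‖P₁‖` times the signed distance
from `V_i` to `ℝ ∙ P₁`, only depends on that system: either its determinant is nonzero and `u`
is determined, or it vanishes and then so does `ω(P₁, P₂ - P₁)`.
-/

theorem LinearMap.IsAlt.mul_eq_mul_of_smul_sub_smul_eq {K M : Type*} [Field K] [AddCommGroup M]
    [Module K M] {B : M →ₗ[K] M →ₗ[K] K} (hB : B.IsAlt) {p d e : M} {u v u' v' : K}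
    (h : u • d - v • e = p) (h' : u' • d - v' • e = p) : u * B p d = u' * B p d := by
  have coeff_e : ∀ {u v : K}, u • d - v • e = p → u * B d e = B p e := by
    rintro u v rfl
    simp [hB.self_eq_zero]
  have coeff_d : ∀ {u v : K}, u • d - v • e = p → B p d = v * B d e := by
    rintro u v rfl
    simp [hB.self_eq_zero, ← hB.neg e d]
  by_cases hD : B d e = 0
  · simp [coeff_d h, hD]
  · rw [mul_right_cancel₀ hD ((coeff_e h).trans (coeff_e h').symm)]

theorem exists_eq_add_smul_sub_of_mem_smul_segment {𝕜 E : Type*} [Ring 𝕜] [PartialOrder 𝕜]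
    [IsOrderedRing 𝕜] [AddCommGroup E] [Module 𝕜 E] {c : 𝕜} {x y z : E}
    (hz : z ∈ c • segment 𝕜 x y) :
    ∃ u : 𝕜, z = c • x + u • (y - x) := by
  rw [segment_eq_image'] at hz
  obtain ⟨-, ⟨θ, -, rfl⟩, rfl⟩ := hz
  exact ⟨c * θ, by simp [smul_add, mul_smul]⟩

theorem exists_smul_sub_smul_eq_of_mem_smul_segment_inter {𝕜 E : Type*} [CommRing 𝕜]
    [PartialOrder 𝕜] [IsOrderedRing 𝕜] [AddCommGroup E] [Module 𝕜 E] {c : 𝕜} {p q r z : E}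
    (hz : z ∈ (c • segment 𝕜 p q) ∩ ((c + 1) • segment 𝕜 r p)) :
    ∃ u v : 𝕜, u • (q - p) - v • (r - p) = p ∧ z = c • p + u • (q - p) := by
  obtain ⟨hpq, hrp⟩ := hz
  rw [segment_symm] at hrp
  obtain ⟨u, hu⟩ := exists_eq_add_smul_sub_of_mem_smul_segment hpq
  obtain ⟨v, hv⟩ := exists_eq_add_smul_sub_of_mem_smul_segment hrp
  refine ⟨u, v, ?_, hu⟩
  rw [hu] at hv
  linear_combination (norm := module) hv

namespace Orientation

variable {E : Type*} [NormedAddCommGroup E] [InnerProductSpace ℝ E] [Fact (Module.finrank ℝ E = 2)]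

theorem infDist_span_singleton (o : Orientation ℝ E (Fin 2)) {p : E} (hp : p ≠ 0) (x : E) :
    Metric.infDist x (ℝ ∙ p) = |o.areaForm p x| / ‖p‖ := by
  have hp' : 0 < ‖p‖ := norm_pos_iff.2 hp
  have areaForm_sub : ∀ t : ℝ, o.areaForm p (x - t • p) = o.areaForm p x := fun t => by
    simp [o.areaForm_apply_self]
  refine le_antisymm ?_ ?_
  · obtain ⟨t, ht⟩ : ∃ t : ℝ, t * ‖p‖ ^ 2 = inner ℝ p x := ⟨_, div_mul_cancel₀ _ (by positivity)⟩
    have horth : inner ℝ p (x - t • p) = 0 := by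
      rw [inner_sub_right, inner_smul_right, real_inner_self_eq_norm_sq, ht, sub_self]
    have hfoot : ‖x - t • p‖ * ‖p‖ = |o.areaForm p x| := by
      rw [← sq_eq_sq₀ (by positivity) (abs_nonneg _), sq_abs, ← areaForm_sub t, mul_pow, mul_comm,
        ← o.inner_sq_add_areaForm_sq, horth]
      ring
    calc Metric.infDist x (ℝ ∙ p) ≤ dist x (t • p) :=
          Metric.infDist_le_dist_of_mem (Submodule.mem_span_singleton.2 ⟨t, rfl⟩)
      _ = |o.areaForm p x| / ‖p‖ := by rw [dist_eq_norm, ← hfoot, mul_div_cancel_right₀ _ hp'.ne']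
  · rw [Metric.infDist_eq_iInf]
    refine le_ciInf fun ⟨y, hy⟩ => ?_
    obtain ⟨t, rfl⟩ := Submodule.mem_span_singleton.1 hy
    rw [div_le_iff₀ hp', dist_eq_norm, ← areaForm_sub t, mul_comm]
    exact o.abs_areaForm_le p _

end Orientation

/-- If for all large `i` the segments `i·[P₁,P₂]` and `(i+1)·[Pₙ,P₁]` intersect in
exactly one point `V_i`, then the distance from `V_i` to the line `τ₁` through the
origin and `P₁` does not depend on `i`. -/
theorem stmt14 (P1 P2 Pn : EuclideanSpace ℝ (Fin 2)) (h1 : P1 ≠ 0)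
    (V : ℕ → EuclideanSpace ℝ (Fin 2)) (N : ℕ)
    (hV : ∀ i ≥ N,
      ((i : ℝ) • segment ℝ P1 P2) ∩ (((i : ℝ) + 1) • segment ℝ Pn P1) = {V i}) :
    ∀ i ≥ N, ∀ j ≥ N,
      Metric.infDist (V i) {x | ∃ t : ℝ, x = t • P1} =
      Metric.infDist (V j) {x | ∃ t : ℝ, x = t • P1} := by
  intro i hi j hj
  have : Fact (Module.finrank ℝ (EuclideanSpace ℝ (Fin 2)) = 2) := ⟨finrank_euclideanSpace_fin⟩
  let o := (EuclideanSpace.basisFun (Fin 2) ℝ).toBasis.orientation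
  have hline : {x | ∃ t : ℝ, x = t • P1} = ((ℝ ∙ P1 : Submodule ℝ _) : Set _) := by
    ext x
    simp [Submodule.mem_span_singleton, eq_comm]
  have hω : ∀ c u : ℝ, o.areaForm P1 (c • P1 + u • (P2 - P1)) = u * o.areaForm P1 (P2 - P1) :=
    fun c u => by simp [o.areaForm_apply_self]
  obtain ⟨u, v, huv, hVi⟩ :=
    exists_smul_sub_smul_eq_of_mem_smul_segment_inter (Set.singleton_subset_iff.1 (hV i hi).ge)
  obtain ⟨u', v', huv', hVj⟩ :=
    exists_smul_sub_smul_eq_of_mem_smul_segment_inter (Set.singleton_subset_iff.1 (hV j hj).ge)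
  rw [hline, o.infDist_span_singleton h1, o.infDist_span_singleton h1, hVi, hVj, hω, hω,
    LinearMap.IsAlt.mul_eq_mul_of_smul_sub_smul_eq o.areaForm_apply_self huv huv']
end
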